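/- arXiv:2302.13174 — 3 statements merged into one kernel-verified Lean document; each statement's English description precedes it below -/
import Mathlib

section
/- For every natural number n ≥ 1, the map sending a nonempty proper subset T of Fin (n+1) to the facet F(T) is injective; consequently, the n-permutohedron has exactly 2^{n+1} − 2 facets, one for each nonempty proper subset of {1, 2, ..., n+1}. -/
/-!
Every facet `F(T)` has a vertex, since permutations act transitively on subsets of a given size.
If `F(T₁) ⊆ F(T₂)` with `T₂` proper and `|T₁| < |T₂|`, take `σ ∈ F(T₁)` and swap the values
`|T₁|` and `|T₂|`: the result stays in `F(T₁)` but sends a point of `T₂` to `|T₂|`, so it leaves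
`F(T₂)`. Hence equal facets of proper subsets have equal sizes, and then a common vertex `σ`
gives `σ(T₁) = σ(T₂)`. The count removes `∅` and `univ` from the `2^(n+1)` subsets.
-/

def permutohedronFacet (n : ℕ) (T : Finset (Fin (n + 1))) : Finset (Equiv.Perm (Fin (n + 1))) :=
  Finset.univ.filter fun σ =>
    T.image σ = Finset.univ.filter fun j : Fin (n + 1) => (j : ℕ) < T.card

open Finset Equiv

namespace Finset

variable {α : Type*} [DecidableEq α]

theorem exists_perm_image_eq {s t : Finset α} (h : #s = #t) : ∃ σ : Perm α, s.image σ = t := by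
  have := Set.powersetCard.isPretransitive (α := α) (n := #t)
  obtain ⟨σ, hσ⟩ := MulAction.exists_smul_eq (Perm α)
    (⟨s, h⟩ : Set.powersetCard α #t) ⟨t, rfl⟩
  exact ⟨σ, by simpa [smul_finset_def] using congrArg Subtype.val hσ⟩

theorem image_swap_mul_eq_of_notMem {s t : Finset α} {σ : Perm α} {a b : α}
    (hσ : s.image σ = t) (ha : a ∉ t) (hb : b ∉ t) : s.image (swap a b * σ) = t := by
  rw [Perm.coe_mul, ← image_image, hσ]
  exact (image_congr fun x hx => swap_apply_of_ne_of_ne (ne_of_mem_of_not_mem hx ha)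
    (ne_of_mem_of_not_mem hx hb)).trans image_id

theorem card_filter_nonempty_ne_univ [Fintype α] [Nonempty α] :
    #{s : Finset α | s.Nonempty ∧ s ≠ univ} = 2 ^ Fintype.card α - 2 := by
  have hproper : ({s : Finset α | s.Nonempty ∧ s ≠ univ} : Finset _) = univ \ {∅, univ} := by
    ext s
    simp [nonempty_iff_ne_empty]
  rw [hproper, card_sdiff_of_subset (subset_univ _), card_pair univ_nonempty.ne_empty.symm,
    card_univ, Fintype.card_finset]

end Finset

section Permutohedron

variable {n : ℕ}

theorem mem_permutohedronFacet {T : Finset (Fin (n + 1))} {σ : Perm (Fin (n + 1))} :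
    σ ∈ permutohedronFacet n T ↔ T.image σ = univ.filter fun j : Fin (n + 1) => (j : ℕ) < #T := by
  simp [permutohedronFacet]

theorem permutohedronFacet_nonempty (T : Finset (Fin (n + 1))) :
    (permutohedronFacet n T).Nonempty := by
  have hcard : #T = #(univ.filter fun j : Fin (n + 1) => (j : ℕ) < #T) := by
    rw [Fin.card_filter_val_lt, min_eq_right (by simpa using T.card_le_univ)]
  obtain ⟨σ, hσ⟩ := exists_perm_image_eq hcard
  exact ⟨σ, mem_permutohedronFacet.2 hσ⟩

theorem card_le_of_permutohedronFacet_subset {T₁ T₂ : Finset (Fin (n + 1))} (hT₂ : T₂ ≠ univ)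
    (h : permutohedronFacet n T₁ ⊆ permutohedronFacet n T₂) : #T₂ ≤ #T₁ := by
  by_contra! hlt
  have hT₂n : #T₂ < n + 1 := by simpa using (card_lt_iff_ne_univ T₂).2 hT₂
  obtain ⟨σ, hσ₁⟩ := permutohedronFacet_nonempty T₁
  let a : Fin (n + 1) := ⟨#T₁, by omega⟩
  let b : Fin (n + 1) := ⟨#T₂, hT₂n⟩
  have hσ₂ := mem_permutohedronFacet.1 (h hσ₁)
  have hswap₁ : T₁.image (swap a b * σ) = univ.filter fun j : Fin (n + 1) => (j : ℕ) < #T₁ :=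
    image_swap_mul_eq_of_notMem (mem_permutohedronFacet.1 hσ₁) (by simp [a])
      (by simpa [b] using hlt.le)
  have hswap₂ := mem_permutohedronFacet.1 (h (mem_permutohedronFacet.2 hswap₁))
  obtain ⟨x, hx, hσx⟩ := mem_image.1 (show a ∈ T₂.image σ by simp [hσ₂, a, hlt])
  have hb : b ∈ T₂.image (swap a b * σ) := mem_image.2 ⟨x, hx, by simp [hσx]⟩
  rw [hswap₂] at hb
  simp [b] at hb

theorem permutohedronFacet_injOn {T₁ T₂ : Finset (Fin (n + 1))} (hT₁ : T₁ ≠ univ)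
    (hT₂ : T₂ ≠ univ) (h : permutohedronFacet n T₁ = permutohedronFacet n T₂) : T₁ = T₂ := by
  have hcard : #T₁ = #T₂ :=
    le_antisymm (card_le_of_permutohedronFacet_subset hT₁ h.ge)
      (card_le_of_permutohedronFacet_subset hT₂ h.le)
  obtain ⟨σ, hσ₁⟩ := permutohedronFacet_nonempty T₁
  have hσ₂ := mem_permutohedronFacet.1 (h ▸ hσ₁)
  rw [mem_permutohedronFacet, hcard, ← hσ₂] at hσ₁
  exact image_injective σ.injective hσ₁

end Permutohedron

theorem permutohedronFacet_injective_general (n : ℕ) :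
    (∀ T₁ T₂ : Finset (Fin (n + 1)), T₁.Nonempty → T₁ ≠ Finset.univ →
      T₂.Nonempty → T₂ ≠ Finset.univ →
      permutohedronFacet n T₁ = permutohedronFacet n T₂ → T₁ = T₂) ∧
    (Finset.univ.filter fun T : Finset (Fin (n + 1)) => T.Nonempty ∧ T ≠ Finset.univ).card
      = 2 ^ (n + 1) - 2 :=
  ⟨fun _ _ _ hT₁ _ hT₂ h => permutohedronFacet_injOn hT₁ hT₂ h,
    by simpa using card_filter_nonempty_ne_univ (α := Fin (n + 1))⟩

/-- For `n ≥ 1`, the map `T ↦ F(T)` is injective on nonempty proper subsets of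
`Fin (n+1)`; consequently the `n`-permutohedron has exactly `2^(n+1) - 2` facets, one
for each nonempty proper subset of `{1, …, n+1}`. -/
theorem permutohedronFacet_injective (n : ℕ) (hn : 1 ≤ n) :
    (∀ T₁ T₂ : Finset (Fin (n + 1)), T₁.Nonempty → T₁ ≠ Finset.univ →
      T₂.Nonempty → T₂ ≠ Finset.univ →
      permutohedronFacet n T₁ = permutohedronFacet n T₂ → T₁ = T₂) ∧
    (Finset.univ.filter fun T : Finset (Fin (n + 1)) => T.Nonempty ∧ T ≠ Finset.univ).card
      = 2 ^ (n + 1) - 2 :=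
  permutohedronFacet_injective_general n
end

section
/- Let n ≥ 3 and let ℓ be a bijection from the prism's vertex set Fin 2 × ZMod n to {1, 2, ..., 2n}. If there exist A and B such that the sum of ℓ over each of the two bases {0} × ZMod n and {1} × ZMod n equals A, and the sum of ℓ over each rectangular face R(i) = {(0, i), (1, i), (0, i+1), (1, i+1)} (for i ∈ ZMod n) equals B, then B = 4n + 2 and n is even. -/
/-!
The labels sum to `1 + ⋯ + 2n = n(2n + 1)`. The two bases partition the vertices, so this
total is `2A`, which forces `n` to be even because `2n + 1` is odd. Every vertex lies in exactly
two rectangular faces, so summing the `n` face sums gives `nB = 2n(2n + 1)`, i.e. `B = 4n + 2`.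
-/

open Finset

theorem Finset.sum_Icc_one_id_mul_two (m : ℕ) : (∑ k ∈ Icc 1 m, k) * 2 = m * (m + 1) := by
  induction m with
  | zero => simp
  | succ m ih => rw [sum_Icc_succ_top (by omega), add_mul, ih]; ring

theorem Equiv.sum_coe_finset {α : Type*} [Fintype α] (s : Finset ℕ) (e : α ≃ s) :
    ∑ a, (e a : ℕ) = ∑ k ∈ s, k := by
  rw [← sum_coe_sort s]; exact e.sum_comp (fun k => (k : ℕ))

section Prism

variable {n : ℕ} {M : Type*} [AddCommMonoid M]

def prismFace (i : ZMod n) : Finset (Fin 2 × ZMod n) := {(0, i), (1, i), (0, i + 1), (1, i + 1)}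

theorem sum_prismFace (hn : 1 < n) (f : Fin 2 × ZMod n → M) (i : ZMod n) :
    ∑ v ∈ prismFace i, f v = f (0, i) + f (1, i) + (f (0, i + 1) + f (1, i + 1)) := by
  have : Fact (1 < n) := ⟨hn⟩
  have hi : i ≠ i + 1 := by simp
  rw [prismFace, sum_insert (by simp [hi]), sum_insert (by simp [hi]), sum_pair (by simp),
    add_assoc]

variable [NeZero n]

theorem sum_sum_prismFace (hn : 1 < n) (f : Fin 2 × ZMod n → M) :
    ∑ i, ∑ v ∈ prismFace i, f v = 2 • ∑ v, f v := by
  have hshift (b : Fin 2) : ∑ i, f (b, i + 1) = ∑ i, f (b, i) :=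
    Equiv.sum_comp (Equiv.addRight 1) fun i => f (b, i)
  simp only [sum_prismFace hn, sum_add_distrib, hshift, two_nsmul, Fintype.sum_prod_type,
    Fin.sum_univ_two]

end Prism

/-- If a labeling of the vertices `Fin 2 × ZMod n` of the regular `n`-gon prism
(`n ≥ 3`) by `{1, …, 2n}` has sum `A` on each of the two bases and sum `B` on each
rectangular face `R(i) = {(0,i), (1,i), (0,i+1), (1,i+1)}`, then `B = 4n + 2` and `n`
is even. -/
theorem magic_prism_necessary (n : ℕ) [NeZero n] (hn : 3 ≤ n)
    (ℓ : Fin 2 × ZMod n ≃ (Finset.Icc 1 (2 * n) : Finset ℕ)) (A B : ℕ)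
    (hA : ∀ b : Fin 2, ∑ i : ZMod n, (ℓ (b, i) : ℕ) = A)
    (hB : ∀ i : ZMod n,
      ∑ v ∈ ({(0, i), (1, i), (0, i + 1), (1, i + 1)} : Finset (Fin 2 × ZMod n)),
        (ℓ v : ℕ) = B) :
    B = 4 * n + 2 ∧ Even n := by
  have htotal : (∑ v, (ℓ v : ℕ)) * 2 = 2 * n * (2 * n + 1) := by
    rw [ℓ.sum_coe_finset, sum_Icc_one_id_mul_two]
  have hbases : ∑ v, (ℓ v : ℕ) = A + A := by
    rw [Fintype.sum_prod_type, Fin.sum_univ_two, hA 0, hA 1]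
  have hfaces : n * B = 2 * ∑ v, (ℓ v : ℕ) := by
    calc n * B = ∑ i : ZMod n, B := by simp [ZMod.card]
      _ = ∑ i, ∑ v ∈ prismFace i, (ℓ v : ℕ) := sum_congr rfl fun i _ => (hB i).symm
      _ = 2 * ∑ v, (ℓ v : ℕ) := sum_sum_prismFace (by omega) _
  refine ⟨Nat.eq_of_mul_eq_mul_left (by omega : 0 < n) (by linarith), ?_⟩
  have hsum_even : Even (n * (2 * n + 1)) := ⟨A, by linarith⟩
  exact (Nat.even_mul.mp hsum_even).resolve_right (by simp [parity_simps])
end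

section
/- For every even n ≥ 4 there exists a bijection ℓ from the prism's vertex set Fin 2 × ZMod n to {1, 2, ..., 2n} such that the sum of ℓ over each of the two bases {0} × ZMod n and {1} × ZMod n equals n(2n+1)/2, and the sum of ℓ over each rectangular face R(i) = {(0, i), (1, i), (0, i+1), (1, i+1)} equals 4n + 2. -/
/-!
Label the vertex `(b, k)`, `0 ≤ k < n`, by `2n - k` when `k ≡ b (mod 2)` and by `k + 2b`
otherwise. Since `n` is even, the first kind of labels runs through `n + 1, …, 2n` and the
second through `1, …, n`, each exactly once. Positions `2j, 2j + 1` of a base carry one label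
of each kind, adding up to `2n + 1`, which gives the base sums. Column `k` adds up to `2n + 2`
or `2n` according to the parity of `k`, and as `n` is even, consecutive columns (also `n - 1`
and `0`) have opposite parities, so every rectangular face adds up to `4n + 2`.
-/

open Finset

lemma ZMod.sum_comp_val {M : Type*} [AddCommMonoid M] (n : ℕ) [NeZero n] (f : ℕ → M) :
    ∑ i : ZMod n, f i.val = ∑ k ∈ range n, f k := by
  obtain ⟨n, rfl⟩ := Nat.exists_eq_succ_of_ne_zero (NeZero.ne n)
  exact Fin.sum_univ_eq_sum_range f _

lemma ZMod.val_add_one_mod_two {n : ℕ} [NeZero n] (h : 2 ∣ n) (i : ZMod n) :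
    (i + 1).val % 2 = (i.val + 1) % 2 := by
  rw [ZMod.val_add, ZMod.val_one_eq_one_mod, Nat.mod_mod_of_dvd _ h, Nat.add_mod,
    Nat.mod_mod_of_dvd _ h, ← Nat.add_mod]

lemma sum_prism_face {α M : Type*} [DecidableEq α] [AddCommMonoid M] (f : Fin 2 × α → M)
    {i j : α} (h : i ≠ j) :
    ∑ v ∈ ({(0, i), (1, i), (0, j), (1, j)} : Finset (Fin 2 × α)), f v
      = (f (0, i) + f (1, i)) + (f (0, j) + f (1, j)) := by
  rw [sum_insert (by simp [h]), sum_insert (by simp [h]), sum_pair (by simp), add_assoc]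

def prismLabel (n b k : ℕ) : ℕ :=
  if k % 2 = b then 2 * n - k else k + 2 * b

section prismLabel

variable {n b k : ℕ}

lemma prismLabel_mem_Icc (hb : b < 2) (hk : k < n) : prismLabel n b k ∈ Icc 1 (2 * n) := by
  unfold prismLabel
  rw [mem_Icc]
  split_ifs <;> omega

lemma prismLabel_injective_of_even (heven : Even n) {b' k' : ℕ} (hb : b < 2) (hb' : b' < 2)
    (hk : k < n) (hk' : k' < n) (h : prismLabel n b k = prismLabel n b' k') :
    b = b' ∧ k = k' := by
  obtain ⟨m, rfl⟩ := heven
  unfold prismLabel at h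
  split_ifs at h <;> omega

lemma prismLabel_two_mul_add_prismLabel_succ (hb : b < 2) {j : ℕ} (hj : j < n) :
    prismLabel n b (2 * j) + prismLabel n b (2 * j + 1) = 2 * n + 1 := by
  unfold prismLabel
  split_ifs <;> omega

lemma sum_range_two_mul_prismLabel (hb : b < 2) {j : ℕ} (hj : j ≤ n) :
    ∑ k ∈ range (2 * j), prismLabel n b k = j * (2 * n + 1) := by
  induction j with
  | zero => simp
  | succ j ih =>
    rw [Nat.mul_succ, sum_range_succ, sum_range_succ, ih (by omega), add_assoc,
      prismLabel_two_mul_add_prismLabel_succ hb (by omega)]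
    ring

lemma prismLabel_zero_add_prismLabel_one (hk : k ≤ 2 * n) :
    prismLabel n 0 k + prismLabel n 1 k = 2 * n + 2 - 2 * (k % 2) := by
  unfold prismLabel
  split_ifs <;> omega

end prismLabel

noncomputable def prismLabeling (n : ℕ) [NeZero n] (heven : Even n) :
    Fin 2 × ZMod n ≃ (Icc 1 (2 * n) : Finset ℕ) :=
  Equiv.ofBijective (fun v ↦ ⟨prismLabel n v.1 v.2.val, prismLabel_mem_Icc v.1.isLt v.2.val_lt⟩) <| by
    refine (Fintype.bijective_iff_injective_and_card _).2 ⟨?_, by simp [ZMod.card]⟩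
    rintro ⟨b, i⟩ ⟨b', i'⟩ h
    obtain ⟨hbb', hii'⟩ := prismLabel_injective_of_even heven b.isLt b'.isLt i.val_lt i'.val_lt
      (congrArg Subtype.val h)
    exact Prod.ext (Fin.ext hbb') (ZMod.val_injective n hii')

@[simp]
lemma prismLabeling_apply {n : ℕ} [NeZero n] (heven : Even n) (v : Fin 2 × ZMod n) :
    (prismLabeling n heven v : ℕ) = prismLabel n v.1 v.2.val :=
  rfl

theorem exists_magic_prism_general (n : ℕ) [NeZero n] (heven : Even n) :
    ∃ ℓ : Fin 2 × ZMod n ≃ (Finset.Icc 1 (2 * n) : Finset ℕ),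
      (∀ b : Fin 2, ∑ i : ZMod n, (ℓ (b, i) : ℕ) = n * (2 * n + 1) / 2) ∧
      (∀ i : ZMod n,
        ∑ v ∈ ({(0, i), (1, i), (0, i + 1), (1, i + 1)} : Finset (Fin 2 × ZMod n)),
          (ℓ v : ℕ) = 4 * n + 2) := by
  obtain ⟨m, hm⟩ := heven.two_dvd
  refine ⟨prismLabeling n heven, fun b ↦ ?_, fun i ↦ ?_⟩
  · simp only [prismLabeling_apply]
    rw [ZMod.sum_comp_val n (prismLabel n b), hm, sum_range_two_mul_prismLabel b.isLt (by omega),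
      mul_assoc, Nat.mul_div_cancel_left _ two_pos]
  · have hpar := ZMod.val_add_one_mod_two heven.two_dvd i
    have hne : i ≠ i + 1 := fun h ↦ by rw [← h] at hpar; omega
    simp only [sum_prism_face _ hne, prismLabeling_apply, Fin.val_zero, Fin.val_one]
    rw [prismLabel_zero_add_prismLabel_one (by linarith [i.val_lt]),
      prismLabel_zero_add_prismLabel_one (by linarith [(i + 1).val_lt])]
    omega

/-- For every even `n ≥ 4` there exists a labeling of the vertices `Fin 2 × ZMod n`
of the regular `n`-gon prism by `{1, …, 2n}` whose sum on each of the two bases is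
`n(2n+1)/2` and whose sum on each rectangular face
`R(i) = {(0,i), (1,i), (0,i+1), (1,i+1)}` is `4n + 2`. -/
theorem exists_magic_prism (n : ℕ) [NeZero n] (hn : 4 ≤ n) (heven : Even n) :
    ∃ ℓ : Fin 2 × ZMod n ≃ (Finset.Icc 1 (2 * n) : Finset ℕ),
      (∀ b : Fin 2, ∑ i : ZMod n, (ℓ (b, i) : ℕ) = n * (2 * n + 1) / 2) ∧
      (∀ i : ZMod n,
        ∑ v ∈ ({(0, i), (1, i), (0, i + 1), (1, i + 1)} : Finset (Fin 2 × ZMod n)),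
          (ℓ v : ℕ) = 4 * n + 2) :=
  exists_magic_prism_general n heven
end
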